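/- Let H ∈ C^{k+1}(ℝ², Sym₂(ℝ²)), λ > 0, Γ₀ ∈ C(ℝ,ℝ), and let Γ_{i+1} be defined recursively by Γ_{i+1}′ = Γᵢ for i = 0,…,k. Then (Γ₀(λx₁)/λ) H = (−1)^{k+1} (Γ_{k+1}(λx₁)/λ^{k+2}) sym∇L_k + sym∇( Σ_{i=0}^{k} (−1)^i (Γ_{i+1}(λx₁)/λ^{i+2}) Lᵢ ) + ( Σ_{i=0}^{k} (−1)^i (Γᵢ(λx₁)/λ^{i+1}) Pᵢ ) e₂⊗e₂, where L₀ = (H₁₁, 2H₁₂), P₀ = H₂₂, and for i ≥ 1: Lᵢ = (∂₁^{(i)}H₁₁, 2∂₁^{(i)}H₁₂ + i ∂₁^{(i−1)}∂₂H₁₁) and Pᵢ = 2∂₁^{(i−1)}∂₂H₁₂ + (i−1) ∂₁^{(i−2)}∂₂²H₁₁. -/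

import Mathlib

open Finset

/-- Partial derivative in the first coordinate. -/
noncomputable def pone (f : (Fin 2 → ℝ) → ℝ) : (Fin 2 → ℝ) → ℝ :=
  fun x => fderiv ℝ f x (Pi.single 0 1)

/-- Partial derivative in the second coordinate. -/
noncomputable def ptwo (f : (Fin 2 → ℝ) → ℝ) : (Fin 2 → ℝ) → ℝ :=
  fun x => fderiv ℝ f x (Pi.single 1 1)

/-- Symmetric gradient of a vector field `L : ℝ² → ℝ²`. -/
noncomputable def symGrad (L : (Fin 2 → ℝ) → (Fin 2 → ℝ)) (x : Fin 2 → ℝ) :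
    Fin 2 → Fin 2 → ℝ :=
  fun i j => (fderiv ℝ L x (Pi.single i 1) j + fderiv ℝ L x (Pi.single j 1) i) / 2

/-- The matrix `e₂ ⊗ e₂`. -/
def E22 : Fin 2 → Fin 2 → ℝ :=
  fun i j => (if i = 1 then (1 : ℝ) else 0) * (if j = 1 then (1 : ℝ) else 0)

/-- The vector fields `Lᵢ`: `L₀ = (H₁₁, 2H₁₂)`, and
`Lᵢ = (∂₁⁽ⁱ⁾H₁₁, 2∂₁⁽ⁱ⁾H₁₂ + i ∂₁⁽ⁱ⁻¹⁾∂₂H₁₁)` for `i ≥ 1`. -/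
noncomputable def Lcoef (H : (Fin 2 → ℝ) → (Fin 2 → Fin 2 → ℝ)) (i : ℕ) :
    (Fin 2 → ℝ) → (Fin 2 → ℝ) :=
  fun x => ![pone^[i] (fun y => H y 0 0) x,
    2 * pone^[i] (fun y => H y 0 1) x +
      (i : ℝ) * pone^[i - 1] (ptwo (fun y => H y 0 0)) x]

/-- The scalar fields `Pᵢ`: `P₀ = H₂₂`, and
`Pᵢ = 2∂₁⁽ⁱ⁻¹⁾∂₂H₁₂ + (i−1)∂₁⁽ⁱ⁻²⁾∂₂²H₁₁` for `i ≥ 1`. -/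
noncomputable def Pcoef (H : (Fin 2 → ℝ) → (Fin 2 → Fin 2 → ℝ)) (i : ℕ) :
    (Fin 2 → ℝ) → ℝ :=
  fun x => if i = 0 then H x 1 1 else
    2 * pone^[i - 1] (ptwo (fun y => H y 0 1)) x +
      ((i : ℝ) - 1) * pone^[i - 2] (ptwo (ptwo (fun y => H y 0 0))) x

/-!
Write `φᵢ(y) = (-1)ⁱ Γᵢ₊₁(λy₁)/λ^{i+2}` and `ψᵢ(y) = (-1)ⁱ Γᵢ(λy₁)/λ^{i+1}`, so that
`∇φᵢ = ψᵢ e₁` and `φᵢ = -ψᵢ₊₁`. By the product rule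
`sym∇(φᵢ Lᵢ) = φᵢ sym∇Lᵢ + ψᵢ e₁ ⊙ Lᵢ`. With `Mᵢ = e₁ ⊙ Lᵢ + Pᵢ e₂⊗e₂`, symmetry of `H` gives
`H = M₀`, and the symmetry of second derivatives gives `sym∇Lᵢ = Mᵢ₊₁` for `i ≤ k`. Hence
`sym∇(φᵢ Lᵢ) = ψᵢ Mᵢ - ψᵢ₊₁ Mᵢ₊₁ - ψᵢ Pᵢ e₂⊗e₂`, and summing over `i ≤ k` telescopes.
-/

noncomputable def symTensor {ι : Type*} (v w : ι → ℝ) : ι → ι → ℝ :=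
  fun i j => (v i * w j + v j * w i) / 2

section SymGrad

variable {L : (Fin 2 → ℝ) → (Fin 2 → ℝ)} {x : Fin 2 → ℝ}

lemma symGrad_eq_of_differentiableAt (hL : DifferentiableAt ℝ L x) :
    symGrad L x =
      ![![pone (fun y => L y 0) x, (pone (fun y => L y 1) x + ptwo (fun y => L y 0) x) / 2],
        ![(pone (fun y => L y 1) x + ptwo (fun y => L y 0) x) / 2, ptwo (fun y => L y 1) x]] := by
  have hfd : fderiv ℝ L x = .pi fun j => fderiv ℝ (fun y => L y j) x :=
    fderiv_pi (differentiableAt_pi.1 hL)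
  ext i j
  fin_cases i <;> fin_cases j <;> simp [symGrad, pone, ptwo, hfd, add_comm]

lemma symGrad_smul {φ : (Fin 2 → ℝ) → ℝ} (hφ : DifferentiableAt ℝ φ x)
    (hL : DifferentiableAt ℝ L x) :
    symGrad (fun y => φ y • L y) x
      = φ x • symGrad L x + symTensor (fun i => fderiv ℝ φ x (Pi.single i 1)) (L x) := by
  have hfd := fderiv_smul hφ hL
  ext i j
  simp only [symGrad, symTensor, Pi.add_apply, Pi.smul_apply, smul_eq_mul]
  rw [show (fun y => φ y • L y) = φ • L from rfl, hfd]
  simp only [add_apply, smul_apply, ContinuousLinearMap.smulRight_apply, Pi.add_apply,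
    Pi.smul_apply, smul_eq_mul]
  ring

lemma symGrad_comp_zero_smul {c : ℝ → ℝ} {c' : ℝ} (hc : HasDerivAt c c' (x 0))
    (hL : DifferentiableAt ℝ L x) :
    symGrad (fun y => c (y 0) • L y) x
      = c (x 0) • symGrad L x + c' • symTensor (Pi.single 0 1) (L x) := by
  have hφ : HasFDerivAt (fun y : Fin 2 → ℝ => c (y 0))
      (c' • ContinuousLinearMap.proj (R := ℝ) (φ := fun _ : Fin 2 => ℝ) 0) x :=
    hc.comp_hasFDerivAt x (hasFDerivAt_apply 0 x)
  rw [symGrad_smul hφ.differentiableAt hL, hφ.fderiv]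
  congr 1
  ext i j
  fin_cases i <;> fin_cases j <;> simp [symTensor] <;> ring

lemma symGrad_sum {ι : Type*} (s : Finset ι) {F : ι → (Fin 2 → ℝ) → Fin 2 → ℝ}
    (hF : ∀ i ∈ s, DifferentiableAt ℝ (F i) x) :
    symGrad (fun y => ∑ i ∈ s, F i y) x = ∑ i ∈ s, symGrad (F i) x := by
  have hfd := fderiv_sum hF
  ext a b
  simp only [symGrad, Finset.sum_apply]
  rw [show (fun y => ∑ i ∈ s, F i y) = ∑ i ∈ s, F i by ext; simp, hfd]
  simp only [FunLike.coe_sum, Finset.sum_apply]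
  rw [← Finset.sum_add_distrib, Finset.sum_div]

end SymGrad

section PartialDerivatives

variable {f : (Fin 2 → ℝ) → ℝ}

lemma fderiv_const_mul_add_const_mul_apply {u v : (Fin 2 → ℝ) → ℝ} {x : Fin 2 → ℝ}
    (hu : DifferentiableAt ℝ u x) (hv : DifferentiableAt ℝ v x) (a b : ℝ) (w : Fin 2 → ℝ) :
    fderiv ℝ (fun y => a * u y + b * v y) x w = a * fderiv ℝ u x w + b * fderiv ℝ v x w := by
  rw [((hu.hasFDerivAt.const_mul a).fun_add (hv.hasFDerivAt.const_mul b)).fderiv]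
  simp

lemma contDiff_pone {n : ℕ} (hf : ContDiff ℝ (n + 1 : ℕ) f) : ContDiff ℝ n (pone f) :=
  (hf.fderiv_right (by norm_cast)).clm_apply contDiff_const

lemma contDiff_ptwo {n : ℕ} (hf : ContDiff ℝ (n + 1 : ℕ) f) : ContDiff ℝ n (ptwo f) :=
  (hf.fderiv_right (by norm_cast)).clm_apply contDiff_const

lemma contDiff_iterate_pone {n : ℕ} (i : ℕ) (hf : ContDiff ℝ (i + n : ℕ) f) :
    ContDiff ℝ n (pone^[i] f) := by
  induction i generalizing f with
  | zero => simpa using hf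
  | succ i ih =>
    exact ih (contDiff_pone (hf.of_le (by norm_cast; omega)))

lemma differentiable_iterate_pone {n i : ℕ} (hf : ContDiff ℝ n f) (hi : i < n) :
    Differentiable ℝ (pone^[i] f) :=
  (contDiff_iterate_pone (n := 1) i (hf.of_le (by exact_mod_cast hi))).differentiable one_ne_zero

lemma fderiv_iterate_pone_apply_single_zero (i : ℕ) (x : Fin 2 → ℝ) :
    fderiv ℝ (pone^[i] f) x (Pi.single 0 1) = pone^[i + 1] f x :=
  congrFun (Function.iterate_succ_apply' pone i f).symm x

lemma ptwo_pone (hf : ContDiff ℝ 2 f) : ptwo (pone f) = pone (ptwo f) := by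
  funext x
  have hd : DifferentiableAt ℝ (fderiv ℝ f) x :=
    (hf.fderiv_right (m := 1) (by norm_num)).differentiable one_ne_zero x
  have hdir : ∀ v w : Fin 2 → ℝ,
      fderiv ℝ (fun y => fderiv ℝ f y v) x w = fderiv ℝ (fderiv ℝ f) x w v := fun v w => by
    rw [fderiv_clm_apply hd (differentiableAt_const v)]
    simp
  exact (hdir _ _).trans <| ((hf.contDiffAt.isSymmSndFDerivAt
    (by simp [minSmoothness_of_isRCLikeNormedField])) _ _).trans (hdir _ _).symm

lemma ptwo_iterate_pone {n : ℕ} (hf : ContDiff ℝ (n + 1 : ℕ) f) :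
    ptwo (pone^[n] f) = pone^[n] (ptwo f) := by
  induction n generalizing f with
  | zero => rfl
  | succ n ih =>
    rw [Function.iterate_succ_apply, ih (contDiff_pone hf),
      ptwo_pone (hf.of_le (by norm_cast; omega)), ← Function.iterate_succ_apply]

lemma fderiv_iterate_pone_apply_single_one {n : ℕ} (hf : ContDiff ℝ (n + 1 : ℕ) f)
    (x : Fin 2 → ℝ) : fderiv ℝ (pone^[n] f) x (Pi.single 1 1) = pone^[n] (ptwo f) x :=
  congrFun (ptwo_iterate_pone hf) x

end PartialDerivatives

noncomputable def Mcoef (H : (Fin 2 → ℝ) → (Fin 2 → Fin 2 → ℝ)) (i : ℕ) (x : Fin 2 → ℝ) :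
    Fin 2 → Fin 2 → ℝ :=
  symTensor (Pi.single 0 1) (Lcoef H i x) + Pcoef H i x • E22

section Coefficients

variable {k i : ℕ} {H : (Fin 2 → ℝ) → (Fin 2 → Fin 2 → ℝ)}

lemma Mcoef_zero (hsym : ∀ x, H x 0 1 = H x 1 0) (x : Fin 2 → ℝ) : Mcoef H 0 x = H x := by
  ext a b
  fin_cases a <;> fin_cases b <;> simp [Mcoef, symTensor, Lcoef, Pcoef, E22, hsym]

variable (hH : ContDiff ℝ (k + 1 : ℕ) H)
include hH

lemma contDiff_entry (a b : Fin 2) : ContDiff ℝ (k + 1 : ℕ) (fun y => H y a b) :=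
  (contDiff_apply_apply ℝ ℝ a b).comp hH

lemma differentiable_Lcoef (hi : i ≤ k) : Differentiable ℝ (Lcoef H i) := by
  have hf := contDiff_entry hH 0 0
  have hg := contDiff_entry hH 0 1
  refine differentiable_pi.2 fun j => ?_
  fin_cases j
  · exact differentiable_iterate_pone hf (by omega)
  · rcases i with _ | i
    · simpa [Lcoef] using (hg.differentiable (by simp)).const_mul 2
    · exact ((differentiable_iterate_pone hg (by omega)).const_mul 2).add
        ((differentiable_iterate_pone (contDiff_ptwo hf) (by omega)).const_mul _)

lemma pone_Lcoef_one_add_ptwo_Lcoef_zero (hi : i ≤ k) (x : Fin 2 → ℝ) :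
    pone (fun y => Lcoef H i y 1) x + ptwo (fun y => Lcoef H i y 0) x = Lcoef H (i + 1) x 1 := by
  have hf := contDiff_entry hH 0 0
  have hg := contDiff_entry hH 0 1
  have h0 : ptwo (fun y => Lcoef H i y 0) x = pone^[i] (ptwo fun y => H y 0 0) x :=
    fderiv_iterate_pone_apply_single_one (hf.of_le (by norm_cast; omega)) x
  rw [h0]
  rcases i with _ | i
  · simp [pone, Lcoef, fderiv_const_mul (hg.differentiable (by simp) x)]
  · have hd1 := differentiable_iterate_pone hg (i := i + 1) (by omega) x
    have hd2 := differentiable_iterate_pone (contDiff_ptwo hf) (i := i) (by omega) x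
    simp only [pone, Lcoef, Matrix.cons_val_one, Matrix.cons_val_zero, Nat.add_sub_cancel]
    rw [fderiv_const_mul_add_const_mul_apply hd1 hd2, fderiv_iterate_pone_apply_single_zero,
      fderiv_iterate_pone_apply_single_zero]
    push_cast
    ring

lemma ptwo_Lcoef_one (hi : i ≤ k) (x : Fin 2 → ℝ) :
    ptwo (fun y => Lcoef H i y 1) x = Pcoef H (i + 1) x := by
  have hf := contDiff_entry hH 0 0
  have hg := contDiff_entry hH 0 1
  rcases i with _ | i
  · simp [ptwo, Lcoef, Pcoef, fderiv_const_mul (hg.differentiable (by simp) x)]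
  · have hd1 := differentiable_iterate_pone hg (i := i + 1) (by omega) x
    have hd2 := differentiable_iterate_pone (contDiff_ptwo hf) (i := i) (by omega) x
    simp only [ptwo, Lcoef, Matrix.cons_val_one, Matrix.cons_val_zero, Nat.add_sub_cancel]
    rw [fderiv_const_mul_add_const_mul_apply hd1 hd2,
      fderiv_iterate_pone_apply_single_one (hg.of_le (by norm_cast; omega)),
      fderiv_iterate_pone_apply_single_one ((contDiff_ptwo hf).of_le (by exact_mod_cast hi))]
    simp only [Pcoef, Nat.add_sub_cancel, Nat.add_eq_zero_iff, one_ne_zero, and_false, if_false]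
    push_cast
    ring

lemma symGrad_Lcoef (hi : i ≤ k) (x : Fin 2 → ℝ) : symGrad (Lcoef H i) x = Mcoef H (i + 1) x := by
  have h00 : pone (fun y => Lcoef H i y 0) x = Lcoef H (i + 1) x 0 :=
    fderiv_iterate_pone_apply_single_zero i x
  have h01 := pone_Lcoef_one_add_ptwo_Lcoef_zero hH hi x
  have h11 := ptwo_Lcoef_one hH hi x
  rw [symGrad_eq_of_differentiableAt (differentiable_Lcoef hH hi x)]
  ext a b
  fin_cases a <;> fin_cases b <;> simp [Mcoef, symTensor, E22, h00, h01, h11]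

end Coefficients

noncomputable def oscCoef (Γ : ℕ → ℝ → ℝ) (l : ℝ) (i : ℕ) (t : ℝ) : ℝ :=
  (-1) ^ i * Γ i (l * t) / l ^ (i + 1)

lemma hasDerivAt_oscCoef_succ {Γ : ℕ → ℝ → ℝ} {l t : ℝ} {i : ℕ} (hl : l ≠ 0)
    (hΓ : HasDerivAt (Γ (i + 1)) (Γ i (l * t)) (l * t)) :
    HasDerivAt (oscCoef Γ l (i + 1)) (-oscCoef Γ l i t) t := by
  have h := ((hΓ.comp t ((hasDerivAt_id t).const_mul l)).const_mul ((-1) ^ (i + 1))).div_const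
    (l ^ (i + 1 + 1))
  rwa [show -oscCoef Γ l i t = (-1) ^ (i + 1) * (Γ i (l * t) * (l * 1)) / l ^ (i + 1 + 1) by
    simp only [oscCoef]; field_simp; ring]

lemma symGrad_sum_oscCoef_smul_Lcoef {k : ℕ} {H : (Fin 2 → ℝ) → (Fin 2 → Fin 2 → ℝ)}
    (hH : ContDiff ℝ (k + 1 : ℕ) H) (hsym : ∀ x, H x 0 1 = H x 1 0)
    {l : ℝ} (hl : l ≠ 0) {Γ : ℕ → ℝ → ℝ}
    (hrec : ∀ i ≤ k, ∀ t : ℝ, HasDerivAt (Γ (i + 1)) (Γ i t) t) (x : Fin 2 → ℝ) :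
    symGrad (fun y => ∑ i ∈ range (k + 1), (-oscCoef Γ l (i + 1) (y 0)) • Lcoef H i y) x
      = oscCoef Γ l 0 (x 0) • H x - oscCoef Γ l (k + 1) (x 0) • symGrad (Lcoef H k) x
        - (∑ i ∈ range (k + 1), oscCoef Γ l i (x 0) * Pcoef H i x) • E22 := by
  set ψ := fun i => oscCoef Γ l i (x 0)
  have hderiv : ∀ i ≤ k, HasDerivAt (fun t => -oscCoef Γ l (i + 1) t) (-(-ψ i)) (x 0) :=
    fun i hi => (hasDerivAt_oscCoef_succ hl (hrec i hi _)).neg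
  have hterm : ∀ i ∈ range (k + 1),
      symGrad (fun y => (-oscCoef Γ l (i + 1) (y 0)) • Lcoef H i y) x
        = (ψ i • Mcoef H i x - ψ (i + 1) • Mcoef H (i + 1) x) - (ψ i * Pcoef H i x) • E22 := by
    intro i hi
    have hik : i ≤ k := mem_range_succ_iff.1 hi
    rw [symGrad_comp_zero_smul (hderiv i hik) (differentiable_Lcoef hH hik x),
      symGrad_Lcoef hH hik]
    simp only [Mcoef]
    module
  have hdiff : ∀ i ∈ range (k + 1),
      DifferentiableAt ℝ (fun y => (-oscCoef Γ l (i + 1) (y 0)) • Lcoef H i y) x := by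
    intro i hi
    have hik : i ≤ k := mem_range_succ_iff.1 hi
    exact ((hderiv i hik).comp_hasFDerivAt x
      (hasFDerivAt_apply (𝕜 := ℝ) (F' := fun _ : Fin 2 => ℝ) 0 x)).differentiableAt.smul
      (differentiable_Lcoef hH hik x)
  rw [symGrad_sum _ hdiff, sum_congr rfl hterm, sum_sub_distrib, sum_range_sub', ← sum_smul,
    Mcoef_zero hsym, ← symGrad_Lcoef hH le_rfl]

theorem stmt9_general (k : ℕ) (H : (Fin 2 → ℝ) → (Fin 2 → Fin 2 → ℝ))
    (hH : ContDiff ℝ (k + 1 : ℕ) H) (hsym : ∀ x, H x 0 1 = H x 1 0)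
    (l : ℝ) (hl : 0 < l)
    (Γ : ℕ → ℝ → ℝ)
    (hrec : ∀ i ≤ k, ∀ t : ℝ, HasDerivAt (Γ (i + 1)) (Γ i t) t) :
    ∀ x : Fin 2 → ℝ,
      (fun i j => Γ 0 (l * x 0) / l * H x i j)
      = (fun i j => (-1 : ℝ) ^ (k + 1) * (Γ (k + 1) (l * x 0) / l ^ (k + 2)) *
            symGrad (Lcoef H k) x i j)
        + symGrad (fun y i' =>
            ∑ i ∈ range (k + 1),
              ((-1 : ℝ) ^ i * Γ (i + 1) (l * y 0) / l ^ (i + 2)) * Lcoef H i y i') x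
        + fun i j =>
            (∑ i' ∈ range (k + 1),
              (-1 : ℝ) ^ i' * Γ i' (l * x 0) / l ^ (i' + 1) * Pcoef H i' x) * E22 i j := by
  intro x
  have hfield : (fun y i' => ∑ i ∈ range (k + 1),
      ((-1 : ℝ) ^ i * Γ (i + 1) (l * y 0) / l ^ (i + 2)) * Lcoef H i y i')
      = fun y => ∑ i ∈ range (k + 1), (-oscCoef Γ l (i + 1) (y 0)) • Lcoef H i y := by
    ext y i'
    simp only [Finset.sum_apply, Pi.smul_apply, smul_eq_mul, oscCoef]
    exact sum_congr rfl fun i _ => by ring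
  rw [hfield, symGrad_sum_oscCoef_smul_Lcoef hH hsym hl.ne' hrec x]
  ext i j
  simp only [oscCoef, pow_zero, one_mul, zero_add, pow_one, Pi.add_apply, Pi.sub_apply,
    Pi.smul_apply, smul_eq_mul]
  ring

theorem stmt9 (k : ℕ) (H : (Fin 2 → ℝ) → (Fin 2 → Fin 2 → ℝ))
    (hH : ContDiff ℝ (k + 1 : ℕ) H) (hsym : ∀ x, H x 0 1 = H x 1 0)
    (l : ℝ) (hl : 0 < l)
    (Γ : ℕ → ℝ → ℝ) (hΓ0 : Continuous (Γ 0))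
    (hrec : ∀ i ≤ k, ∀ t : ℝ, HasDerivAt (Γ (i + 1)) (Γ i t) t) :
    ∀ x : Fin 2 → ℝ,
      (fun i j => Γ 0 (l * x 0) / l * H x i j)
      = (fun i j => (-1 : ℝ) ^ (k + 1) * (Γ (k + 1) (l * x 0) / l ^ (k + 2)) *
            symGrad (Lcoef H k) x i j)
        + symGrad (fun y i' =>
            ∑ i ∈ range (k + 1),
              ((-1 : ℝ) ^ i * Γ (i + 1) (l * y 0) / l ^ (i + 2)) * Lcoef H i y i') x
        + fun i j =>
            (∑ i' ∈ range (k + 1),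
              (-1 : ℝ) ^ i' * Γ i' (l * x 0) / l ^ (i' + 1) * Pcoef H i' x) * E22 i j :=
  stmt9_general k H hH hsym l hl Γ hrec
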